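/- For a Banach space E, 1 ≤ p < ∞, and (a_k) ∈ ℓ_p, x ∈ E, the sequence (a_k x)_{k=1}^∞ is mid p-summable with ‖(a_k x)_k‖_{p,mid} = ‖(a_k)‖_p · ‖x‖, and moreover ‖(a_k x)_{k=n}^∞‖_{p,mid} → 0 as n → ∞, so (a_k x)_k ∈ (ℓ_p^{mid})^u(E). -/

import Mathlib

open Filter Topology NormedSpace
open scoped TensorProduct ENNReal

/-- Weak `p`-summability for an `E`-valued sequence. -/
def WeaklySummable (𝕜 : Type) [RCLike 𝕜] (p : ℝ)
    {E : Type} [NormedAddCommGroup E] [NormedSpace 𝕜 E] (x : ℕ → E) : Prop :=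
  ∀ φ : StrongDual 𝕜 E, Summable (fun j => ‖φ (x j)‖ ^ p)

/-- The weak `ℓ_p` norm `‖(x_j)‖_{w,p} = sup_{φ ∈ B_{E'}} ‖(φ(x_j))_j‖_p`. -/
noncomputable def weakNorm (𝕜 : Type) [RCLike 𝕜] (p : ℝ)
    {E : Type} [NormedAddCommGroup E] [NormedSpace 𝕜 E] (x : ℕ → E) : ℝ :=
  ⨆ φ : {φ : StrongDual 𝕜 E // ‖φ‖ ≤ 1}, (∑' j, ‖φ.1 (x j)‖ ^ p) ^ (1 / p)

/-- Membership in `ℓ_p^w(E')` for a sequence of functionals, expressed through the unit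
ball of `E` (for dual-valued sequences this computes the weak `ℓ_p` norm). -/
def DualWeaklySummable (𝕜 : Type) [RCLike 𝕜] (p : ℝ) {E : Type} [NormedAddCommGroup E] [NormedSpace 𝕜 E]
    (φ : ℕ → StrongDual 𝕜 E) : Prop :=
  ∃ C : ℝ, ∀ x : E, ‖x‖ ≤ 1 →
    Summable (fun n => ‖φ n x‖ ^ p) ∧ (∑' n, ‖φ n x‖ ^ p) ^ (1 / p) ≤ C

/-- The weak `ℓ_p` norm of a sequence of functionals. -/
noncomputable def dualWeakNorm (𝕜 : Type) [RCLike 𝕜] (p : ℝ) {E : Type} [NormedAddCommGroup E] [NormedSpace 𝕜 E]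
    (φ : ℕ → StrongDual 𝕜 E) : ℝ :=
  ⨆ x : {x : E // ‖x‖ ≤ 1}, (∑' n, ‖φ n x.1‖ ^ p) ^ (1 / p)

/-- Membership in `ℓ_p^{mid}(E)`: the mid `p`-summable sequences. -/
def MidSummable (𝕜 : Type) [RCLike 𝕜] (p : ℝ) {E : Type} [NormedAddCommGroup E] [NormedSpace 𝕜 E]
    (x : ℕ → E) : Prop :=
  ∃ C : ℝ, ∀ φ : ℕ → StrongDual 𝕜 E,
    DualWeaklySummable 𝕜 p φ → dualWeakNorm 𝕜 p φ ≤ 1 →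
    (∀ n, Summable fun j => ‖φ n (x j)‖ ^ p) ∧
    Summable (fun n => ∑' j, ‖φ n (x j)‖ ^ p) ∧
    (∑' n, ∑' j, ‖φ n (x j)‖ ^ p) ^ (1 / p) ≤ C

/-- The mid `p`-summing norm `‖(x_j)‖_{p,mid}`. -/
noncomputable def midNorm (𝕜 : Type) [RCLike 𝕜] (p : ℝ) {E : Type} [NormedAddCommGroup E] [NormedSpace 𝕜 E]
    (x : ℕ → E) : ℝ :=
  ⨆ φ : {φ : ℕ → StrongDual 𝕜 E // DualWeaklySummable 𝕜 p φ ∧ dualWeakNorm 𝕜 p φ ≤ 1},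
    (∑' n, ∑' j, ‖φ.1 n (x j)‖ ^ p) ^ (1 / p)

/-- Membership in `ℓ_p⟨E⟩`: the Cohen strongly `p`-summable sequences, where `q = p*`. -/
def CohenSummable (𝕜 : Type) [RCLike 𝕜] (q : ℝ) {E : Type} [NormedAddCommGroup E] [NormedSpace 𝕜 E]
    (x : ℕ → E) : Prop :=
  ∃ C : ℝ, ∀ φ : ℕ → StrongDual 𝕜 E,
    DualWeaklySummable 𝕜 q φ → dualWeakNorm 𝕜 q φ ≤ 1 →
    Summable (fun j => ‖φ j (x j)‖) ∧ ∑' j, ‖φ j (x j)‖ ≤ C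

/-- The Cohen norm on `ℓ_p⟨E⟩`, where `q = p*`. -/
noncomputable def cohenNorm (𝕜 : Type) [RCLike 𝕜] (q : ℝ) {E : Type} [NormedAddCommGroup E] [NormedSpace 𝕜 E]
    (x : ℕ → E) : ℝ :=
  ⨆ φ : {φ : ℕ → StrongDual 𝕜 E // DualWeaklySummable 𝕜 q φ ∧ dualWeakNorm 𝕜 q φ ≤ 1},
    ∑' j, ‖φ.1 j (x j)‖

/-! Scaling by `a_j` factors out of every functional, so
`Σ_n Σ_j |φ_n(a_j x)|^p = ‖a‖_p^p · Σ_n |φ_n(x)|^p`, and the last sum is at most `‖x‖^p` when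
`‖(φ_n)‖_{w,p} ≤ 1`. The bound is attained by `(ψ, 0, 0, …)` with `ψ` a norming functional of `x`.
Applied to the shifted sequences, the norm formula turns the tails in the mid norm into the
tails of the series `Σ_k |a_k|^p`. -/

section

variable {𝕜 : Type} [RCLike 𝕜] {E : Type} [NormedAddCommGroup E] [NormedSpace 𝕜 E] {p : ℝ}

theorem rpow_one_div_tsum_const_mul_rpow (hp : p ≠ 0) {c : ℝ} (hc : 0 ≤ c) {f : ℕ → ℝ}
    (hf : ∀ n, 0 ≤ f n) : (∑' n, (c * f n) ^ p) ^ (1 / p) = c * (∑' n, f n ^ p) ^ (1 / p) := by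
  simp_rw [Real.mul_rpow hc (hf _), tsum_mul_left]
  rw [Real.mul_rpow (by positivity) (tsum_nonneg fun n => Real.rpow_nonneg (hf n) p), one_div,
    Real.rpow_rpow_inv hc hp]

variable (𝕜) in
theorem exists_smul_eq_of_norm_le_one (x : E) :
    ∃ (c : 𝕜) (y : E), ‖y‖ ≤ 1 ∧ x = c • y ∧ ‖c‖ = ‖x‖ := by
  rcases eq_or_ne x 0 with rfl | hx
  · exact ⟨0, 0, by simp, by simp, by simp⟩
  · refine ⟨‖x‖, (‖x‖⁻¹ : 𝕜) • x, (norm_smul_inv_norm hx).le, ?_, by simp⟩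
    rw [smul_inv_smul₀ (by simpa using hx)]

theorem norm_apply_smul_rpow (ψ : StrongDual 𝕜 E) (c : 𝕜) (x : E) :
    ‖ψ (c • x)‖ ^ p = ‖c‖ ^ p * ‖ψ x‖ ^ p := by
  rw [map_smul, norm_smul, Real.mul_rpow (norm_nonneg _) (norm_nonneg _)]

theorem tsum_norm_apply_smul_rpow (ψ : StrongDual 𝕜 E) (a : ℕ → 𝕜) (x : E) :
    ∑' j, ‖ψ (a j • x)‖ ^ p = (∑' j, ‖a j‖ ^ p) * ‖ψ x‖ ^ p := by
  simp_rw [norm_apply_smul_rpow, tsum_mul_right]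

theorem rpow_one_div_tsum_tsum_norm_apply_smul_rpow (φ : ℕ → StrongDual 𝕜 E) (a : ℕ → 𝕜)
    (x : E) : (∑' n, ∑' j, ‖φ n (a j • x)‖ ^ p) ^ (1 / p) =
      (∑' j, ‖a j‖ ^ p) ^ (1 / p) * (∑' n, ‖φ n x‖ ^ p) ^ (1 / p) := by
  simp_rw [tsum_norm_apply_smul_rpow, tsum_mul_left]
  exact Real.mul_rpow (tsum_nonneg fun j => by positivity) (tsum_nonneg fun n => by positivity)

theorem hasSum_norm_single_apply_rpow (hp : p ≠ 0) (i : ℕ) (ψ : StrongDual 𝕜 E) (x : E) :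
    HasSum (fun n => ‖(Pi.single i ψ : ℕ → StrongDual 𝕜 E) n x‖ ^ p) (‖ψ x‖ ^ p) := by
  convert hasSum_pi_single i (‖ψ x‖ ^ p) using 1
  ext n
  rcases eq_or_ne n i with rfl | hn <;> simp [*, Real.zero_rpow hp]

theorem rpow_one_div_tsum_norm_single_apply_rpow (hp : p ≠ 0) (i : ℕ) (ψ : StrongDual 𝕜 E)
    (x : E) : (∑' n, ‖(Pi.single i ψ : ℕ → StrongDual 𝕜 E) n x‖ ^ p) ^ (1 / p) = ‖ψ x‖ := by
  rw [(hasSum_norm_single_apply_rpow hp i ψ x).tsum_eq, one_div,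
    Real.rpow_rpow_inv (norm_nonneg _) hp]

theorem dualWeaklySummable_single (hp : p ≠ 0) (i : ℕ) (ψ : StrongDual 𝕜 E) :
    DualWeaklySummable 𝕜 p (Pi.single i ψ) :=
  ⟨‖ψ‖, fun x hx => ⟨(hasSum_norm_single_apply_rpow hp i ψ x).summable, by
    rw [rpow_one_div_tsum_norm_single_apply_rpow hp]
    exact (ψ.le_opNorm_of_le hx).trans_eq (mul_one _)⟩⟩

theorem dualWeakNorm_single_le (hp : p ≠ 0) (i : ℕ) (ψ : StrongDual 𝕜 E) :
    dualWeakNorm 𝕜 p (Pi.single i ψ) ≤ ‖ψ‖ :=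
  Real.iSup_le (fun x => by
    rw [rpow_one_div_tsum_norm_single_apply_rpow hp]
    exact (ψ.le_opNorm_of_le x.2).trans_eq (mul_one _)) (norm_nonneg ψ)

namespace DualWeaklySummable

variable {φ : ℕ → StrongDual 𝕜 E}

theorem bddAbove (h : DualWeaklySummable 𝕜 p φ) :
    BddAbove (Set.range fun x : {x : E // ‖x‖ ≤ 1} => (∑' n, ‖φ n x.1‖ ^ p) ^ (1 / p)) :=
  let ⟨C, hC⟩ := h
  ⟨C, Set.forall_mem_range.2 fun x => (hC x.1 x.2).2⟩

theorem summable (h : DualWeaklySummable 𝕜 p φ) (x : E) : Summable fun n => ‖φ n x‖ ^ p := by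
  obtain ⟨C, hC⟩ := h
  obtain ⟨c, y, hy, rfl, -⟩ := exists_smul_eq_of_norm_le_one 𝕜 x
  simpa only [norm_apply_smul_rpow] using (hC y hy).1.mul_left (‖c‖ ^ p)

theorem rpow_one_div_tsum_le (hp : p ≠ 0) (h : DualWeaklySummable 𝕜 p φ) (x : E) :
    (∑' n, ‖φ n x‖ ^ p) ^ (1 / p) ≤ ‖x‖ * dualWeakNorm 𝕜 p φ := by
  obtain ⟨c, y, hy, rfl, hc⟩ := exists_smul_eq_of_norm_le_one 𝕜 x
  rw [← hc]
  simp_rw [map_smul, norm_smul]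
  rw [rpow_one_div_tsum_const_mul_rpow hp (norm_nonneg c) fun n => norm_nonneg (φ n y)]
  exact mul_le_mul_of_nonneg_left (le_ciSup h.bddAbove ⟨y, hy⟩) (norm_nonneg c)

end DualWeaklySummable

theorem rpow_one_div_tsum_tsum_norm_apply_smul_rpow_le (hp : p ≠ 0) {φ : ℕ → StrongDual 𝕜 E}
    (hφ : DualWeaklySummable 𝕜 p φ) (hφ1 : dualWeakNorm 𝕜 p φ ≤ 1) (a : ℕ → 𝕜) (x : E) :
    (∑' n, ∑' j, ‖φ n (a j • x)‖ ^ p) ^ (1 / p) ≤ (∑' j, ‖a j‖ ^ p) ^ (1 / p) * ‖x‖ := by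
  rw [rpow_one_div_tsum_tsum_norm_apply_smul_rpow]
  gcongr
  exact (hφ.rpow_one_div_tsum_le hp x).trans (mul_le_of_le_one_right (norm_nonneg x) hφ1)

theorem midSummable_smul_const (hp : p ≠ 0) {a : ℕ → 𝕜} (ha : Summable fun k => ‖a k‖ ^ p)
    (x : E) : MidSummable 𝕜 p (fun k => a k • x) :=
  ⟨_, fun φ hφ hφ1 =>
    ⟨fun n => by simpa only [norm_apply_smul_rpow] using ha.mul_right (‖φ n x‖ ^ p),
      by simpa only [tsum_norm_apply_smul_rpow] using (hφ.summable x).mul_left _,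
      rpow_one_div_tsum_tsum_norm_apply_smul_rpow_le hp hφ hφ1 a x⟩⟩

theorem midNorm_smul_const (hp : p ≠ 0) (a : ℕ → 𝕜) (x : E) :
    midNorm 𝕜 p (fun k => a k • x) = (∑' k, ‖a k‖ ^ p) ^ (1 / p) * ‖x‖ := by
  have hle : ∀ φ : {φ : ℕ → StrongDual 𝕜 E // DualWeaklySummable 𝕜 p φ ∧ dualWeakNorm 𝕜 p φ ≤ 1},
      (∑' n, ∑' j, ‖φ.1 n (a j • x)‖ ^ p) ^ (1 / p) ≤ (∑' k, ‖a k‖ ^ p) ^ (1 / p) * ‖x‖ :=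
    fun φ => rpow_one_div_tsum_tsum_norm_apply_smul_rpow_le hp φ.2.1 φ.2.2 a x
  refine le_antisymm (Real.iSup_le hle (by positivity)) ?_
  obtain ⟨ψ, hψ, hψx⟩ := exists_dual_vector'' 𝕜 x
  refine le_ciSup_of_le ⟨_, Set.forall_mem_range.2 hle⟩
    ⟨Pi.single 0 ψ, dualWeaklySummable_single hp 0 ψ, (dualWeakNorm_single_le hp 0 ψ).trans hψ⟩
    (le_of_eq ?_)
  rw [rpow_one_div_tsum_tsum_norm_apply_smul_rpow, rpow_one_div_tsum_norm_single_apply_rpow hp,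
    hψx, RCLike.norm_ofReal, abs_norm]

theorem tendsto_midNorm_smul_const_tail (hp : 0 < p) (a : ℕ → 𝕜) (x : E) :
    Tendsto (fun n => midNorm 𝕜 p (fun k => a (k + n) • x)) atTop (𝓝 0) := by
  simp_rw [midNorm_smul_const hp.ne']
  simpa using ((tendsto_sum_nat_add fun k => ‖a k‖ ^ p).rpow_const_nhds_zero
    (one_div_pos.2 hp)).mul_const ‖x‖

end

theorem scalar_times_vector_mem_midu_general
    (𝕜 : Type) [RCLike 𝕜] (p : ℝ) (hp : 1 ≤ p)
    (E : Type) [NormedAddCommGroup E] [NormedSpace 𝕜 E]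
    (a : ℕ → 𝕜) (ha : Summable fun k => ‖a k‖ ^ p) (x : E) :
    MidSummable 𝕜 p (fun k => a k • x) ∧
    midNorm 𝕜 p (fun k => a k • x) = (∑' k, ‖a k‖ ^ p) ^ (1 / p) * ‖x‖ ∧
    Filter.Tendsto (fun n => midNorm 𝕜 p (fun k => a (k + n) • x))
      Filter.atTop (nhds 0) := by
  have hp0 : 0 < p := zero_lt_one.trans_le hp
  exact ⟨midSummable_smul_const hp0.ne' ha x, midNorm_smul_const hp0.ne' a x,
    tendsto_midNorm_smul_const_tail hp0 a x⟩

/-- For `(a_k) ∈ ℓ_p` and `x ∈ E`, the sequence `(a_k x)_k` is mid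
`p`-summable with `‖(a_k x)‖_{p,mid} = ‖(a_k)‖_p ‖x‖`, and its tails tend to `0` in the
mid norm, so `(a_k x)_k ∈ (ℓ_p^{mid})^u(E)`. -/
theorem scalar_times_vector_mem_midu
    (𝕜 : Type) [RCLike 𝕜] (p : ℝ) (hp : 1 ≤ p)
    (E : Type) [NormedAddCommGroup E] [NormedSpace 𝕜 E] [CompleteSpace E]
    (a : ℕ → 𝕜) (ha : Summable fun k => ‖a k‖ ^ p) (x : E) :
    MidSummable 𝕜 p (fun k => a k • x) ∧
    midNorm 𝕜 p (fun k => a k • x) = (∑' k, ‖a k‖ ^ p) ^ (1 / p) * ‖x‖ ∧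
    Filter.Tendsto (fun n => midNorm 𝕜 p (fun k => a (k + n) • x))
      Filter.atTop (nhds 0) :=
  scalar_times_vector_mem_midu_general 𝕜 p hp E a ha x
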